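/- arXiv:1501.02424 — 4 statements merged into one kernel-verified Lean document; each statement's English description precedes it below -/
import Mathlib

section
/- Let w be any function in the shape space P(K) = P₂(K) + span{x₁³, x₂³} of the two-dimensional rectangular Morley element on the square K. Then the deviation of ∂w/∂x₁ from its edge mean is the same function on the two vertical edges of K, and the deviation of ∂w/∂x₂ from its edge mean is the same function on the two horizontal edges: for all x₂ ∈ [x₂c−h, x₂c+h], (R⁰_{e₂}(∂w/∂x₁))(x₂) = (R⁰_{e₄}(∂w/∂x₁))(x₂), and for all x₁ ∈ [x₁c−h, x₁c+h], (R⁰_{e₁}(∂w/∂x₂))(x₁) = (R⁰_{e₃}(∂w/∂x₂))(x₁). -/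
open MeasureTheory

/-- Partial derivative in the first variable of a curried function on `ℝ²`. -/
noncomputable def pdx (f : ℝ → ℝ → ℝ) : ℝ → ℝ → ℝ := fun x y => deriv (fun t => f t y) x

/-- Partial derivative in the second variable of a curried function on `ℝ²`. -/
noncomputable def pdy (f : ℝ → ℝ → ℝ) : ℝ → ℝ → ℝ := fun x y => deriv (fun t => f x t) y

/-- Membership in the shape space `P(K) = P₂(K) + span{x₁³, x₂³}` of the two-dimensional
rectangular Morley element. -/
def MorleyShape2 (w : ℝ → ℝ → ℝ) : Prop :=
  ∃ c0 c1 c2 c3 c4 c5 c6 c7 : ℝ, ∀ x y : ℝ,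
    w x y = c0 + c1 * x + c2 * y + c3 * x ^ 2 + c4 * (x * y) + c5 * y ^ 2
      + c6 * x ^ 3 + c7 * y ^ 3

/- ∂w/∂x₁ = c₁ + 2c₃x₁ + 3c₆x₁² + c₄x₂ depends on x₂ only through a slope c₄ shared by all vertical
lines, so on the edges e₂ and e₄ it differs by a constant, which the operator g ↦ g − Π⁰g kills.
The horizontal edges follow by exchanging the roles of x₁ and x₂, which preserves the shape space. -/

lemma sub_inv_mul_integral_eq_of_eq_add_const {f g : ℝ → ℝ} {a b k : ℝ} (hab : a ≠ b)
    (hg : IntervalIntegrable g volume a b) (hfg : ∀ t, f t = g t + k) (y : ℝ) :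
    f y - (b - a)⁻¹ * ∫ t in a..b, f t = g y - (b - a)⁻¹ * ∫ t in a..b, g t := by
  have hba : b - a ≠ 0 := sub_ne_zero.mpr hab.symm
  simp only [hfg, intervalIntegral.integral_add hg intervalIntegrable_const,
    intervalIntegral.integral_const, smul_eq_mul]
  field_simp
  ring

namespace MorleyShape2

variable {w : ℝ → ℝ → ℝ}

theorem swap (hw : MorleyShape2 w) : MorleyShape2 (fun x y => w y x) := by
  obtain ⟨c0, c1, c2, c3, c4, c5, c6, c7, hw⟩ := hw
  exact ⟨c0, c2, c1, c5, c4, c3, c7, c6, fun x y => (hw y x).trans (by ring)⟩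

theorem exists_pdx_eq (hw : MorleyShape2 w) :
    ∃ (f : ℝ → ℝ) (c : ℝ), ∀ x y, pdx w x y = f x + c * y := by
  obtain ⟨c0, c1, c2, c3, c4, c5, c6, c7, hw⟩ := hw
  refine ⟨fun x => c1 + 2 * c3 * x + 3 * c6 * x ^ 2, c4, fun x y => ?_⟩
  simp only [pdx, hw]
  have hx := hasDerivAt_id x
  refine HasDerivAt.deriv <| HasDerivAt.congr_deriv
    ((((((((hasDerivAt_const x c0).add (hx.const_mul c1)).add (hasDerivAt_const x (c2 * y))).add
      ((hx.pow 2).const_mul c3)).add ((hx.mul_const y).const_mul c4)).add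
      (hasDerivAt_const x (c5 * y ^ 2))).add ((hx.pow 3).const_mul c6)).add
      (hasDerivAt_const x (c7 * y ^ 3))) ?_
  simp only [id]
  ring

theorem pdx_sub_inv_mul_integral_eq (hw : MorleyShape2 w) {a b : ℝ} (hab : a ≠ b)
    (x x' y : ℝ) :
    pdx w x y - (b - a)⁻¹ * ∫ t in a..b, pdx w x t
      = pdx w x' y - (b - a)⁻¹ * ∫ t in a..b, pdx w x' t := by
  obtain ⟨f, c, hf⟩ := hw.exists_pdx_eq
  have hint : IntervalIntegrable (pdx w x') volume a b := by
    rw [funext (hf x')]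
    exact (continuous_const.add (continuous_const.mul continuous_id)).intervalIntegrable _ _
  exact sub_inv_mul_integral_eq_of_eq_add_const (k := f x - f x') hab hint
    (fun t => by rw [hf, hf]; ring) y

end MorleyShape2

/-- For `w` in the 2D rectangular Morley shape space, the deviation of the normal
derivative from its edge mean coincides on the two opposite edges of `K`. -/
theorem stmt_0 (x1c x2c h : ℝ) (hh : 0 < h) (w : ℝ → ℝ → ℝ) (hw : MorleyShape2 w) :
    (∀ y ∈ Set.Icc (x2c - h) (x2c + h),
        pdx w (x1c + h) y - (1 / (2 * h)) * (∫ t in (x2c - h)..(x2c + h), pdx w (x1c + h) t)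
          = pdx w (x1c - h) y - (1 / (2 * h)) * (∫ t in (x2c - h)..(x2c + h), pdx w (x1c - h) t)) ∧
    (∀ x ∈ Set.Icc (x1c - h) (x1c + h),
        pdy w x (x2c - h) - (1 / (2 * h)) * (∫ t in (x1c - h)..(x1c + h), pdy w t (x2c - h))
          = pdy w x (x2c + h) - (1 / (2 * h)) * (∫ t in (x1c - h)..(x1c + h), pdy w t (x2c + h))) := by
  have hlen : ∀ c, 1 / (2 * h) = ((c + h) - (c - h))⁻¹ := fun c => by ring
  have hne : ∀ c, c - h ≠ c + h := fun c => by linarith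
  refine ⟨fun y _ => ?_, fun x _ => ?_⟩
  · rw [hlen x2c]
    exact hw.pdx_sub_inv_mul_integral_eq (hne x2c) _ _ y
  · rw [hlen x1c]
    -- `pdy w x y` is definitionally `pdx (fun a b => w b a) y x`
    exact (hw.swap.pdx_sub_inv_mul_integral_eq (hne x1c) _ _ x).symm
end

section
/- For every ŵ in the reference shape space P̂ = P₂(K̂) + span{ξ₁³, ξ₂³} of the two-dimensional rectangular Morley element and for each i ∈ {1, 2}, the orthogonality relation ∫_{K̂} ∂(ŵ − Îŵ)/∂ξᵢ dξ₁dξ₂ = 0 holds. -/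
open MeasureTheory

/-- The bilinear (Q₁) interpolation operator on the reference square `[-1,1]²`:
the unique element of `span{1, ξ₁, ξ₂, ξ₁ξ₂}` agreeing with `w` at the four vertices. -/
noncomputable def Ihat (w : ℝ → ℝ → ℝ) : ℝ → ℝ → ℝ := fun x y =>
  (w 1 1 * ((1 + x) * (1 + y)) + w 1 (-1) * ((1 + x) * (1 - y))
    + w (-1) 1 * ((1 - x) * (1 + y)) + w (-1) (-1) * ((1 - x) * (1 - y))) / 4

/-!
The interpolation error of a Morley shape function separates as `e(ξ₁) + f(ξ₂)`, where
`e, f ∈ span{t² - 1, t³ - t}`: `Î` reproduces the `Q₁` part `1, ξ₁, ξ₂, ξ₁ξ₂` exactly and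
replaces `t²`, `t³` by their linear interpolants `1`, `t` at `t = ±1`. Hence `∂₁(ŵ - Îŵ) = e'(ξ₁)`
integrates to `2 (e(1) - e(-1)) = 0`, and symmetrically for `∂₂`.
-/

def endpointBubble (a b t : ℝ) : ℝ := a * (t ^ 2 - 1) + b * (t ^ 3 - t)

lemma contDiff_endpointBubble (a b : ℝ) : ContDiff ℝ 1 (endpointBubble a b) := by
  unfold endpointBubble
  fun_prop

lemma endpointBubble_one_eq_neg_one (a b : ℝ) :
    endpointBubble a b 1 = endpointBubble a b (-1) := by
  norm_num [endpointBubble]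

lemma MorleyShape2.sub_Ihat_eq {w : ℝ → ℝ → ℝ} (hw : MorleyShape2 w) :
    ∃ a b c d : ℝ, ∀ x y : ℝ,
      w x y - Ihat w x y = endpointBubble a b x + endpointBubble c d y := by
  obtain ⟨c0, c1, c2, c3, c4, c5, c6, c7, hc⟩ := hw
  refine ⟨c3, c6, c5, c7, fun x y => ?_⟩
  simp only [Ihat, hc, endpointBubble]
  ring

lemma pdx_separable (p q : ℝ → ℝ) :
    pdx (fun x y => p x + q y) = fun x _ => deriv p x := by
  ext x y
  exact deriv_add_const (q y)

lemma pdy_separable (p q : ℝ → ℝ) :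
    pdy (fun x y => p x + q y) = fun _ y => deriv q y := by
  ext x y
  exact deriv_const_add (p x)

lemma integral_deriv_eq_zero_of_eq {f : ℝ → ℝ} {a b : ℝ} (hf : ContDiff ℝ 1 f)
    (hab : f a = f b) : ∫ t in a..b, deriv f t = 0 := by
  rw [intervalIntegral.integral_deriv_eq_sub (fun t _ => (hf.differentiable one_ne_zero) t)
    ((hf.continuous_deriv le_rfl).intervalIntegrable a b), hab, sub_self]

lemma integral_deriv_endpointBubble (a b : ℝ) :
    ∫ t in (-1 : ℝ)..1, deriv (endpointBubble a b) t = 0 :=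
  integral_deriv_eq_zero_of_eq (contDiff_endpointBubble a b)
    (endpointBubble_one_eq_neg_one a b).symm

/-- Orthogonality of the gradient of the bilinear interpolation error on the reference
square, for functions in the reference Morley shape space. -/
theorem stmt_2 (w : ℝ → ℝ → ℝ) (hw : MorleyShape2 w) :
    (∫ x in (-1:ℝ)..1, ∫ y in (-1:ℝ)..1,
        pdx (fun a b => w a b - Ihat w a b) x y) = 0 ∧
    (∫ x in (-1:ℝ)..1, ∫ y in (-1:ℝ)..1,
        pdy (fun a b => w a b - Ihat w a b) x y) = 0 := by
  obtain ⟨a, b, c, d, hsplit⟩ := hw.sub_Ihat_eq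
  have herr : (fun x y => w x y - Ihat w x y)
      = fun x y => endpointBubble a b x + endpointBubble c d y := by
    ext x y
    exact hsplit x y
  rw [herr, pdx_separable, pdy_separable]
  constructor
  · simp only [intervalIntegral.integral_const, smul_eq_mul]
    rw [intervalIntegral.integral_const_mul, integral_deriv_endpointBubble, mul_zero]
  · simp only [integral_deriv_endpointBubble, intervalIntegral.integral_zero]
end

section
/- There exists a constant C > 0 such that for every continuously differentiable function φ on K̂ = [−1,1]², every ŵ in the reference shape space P̂ = P₂(K̂) + span{ξ₁³, ξ₂³}, and each i ∈ {1, 2}, one has |∫_{K̂} φ · ∂(ŵ − Îŵ)/∂ξᵢ dξ₁dξ₂| ≤ C ‖∇φ‖_{L²(K̂)} |ŵ|_{H²(K̂)}. -/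
/-! For `ŵ ∈ P̂` the bilinear interpolant reproduces `1, ξ₁, ξ₂, ξ₁ξ₂` and sends `ξᵢ²` to `1`
and `ξᵢ³` to `ξᵢ`, so `ŵ - Îŵ = g(ξ₁) + h(ξ₂)` with `g(t) = (t² - 1)(c₃ + c₆ t)` and `h` alike:
cubics vanishing at `±1`. Hence `∂₁(ŵ - Îŵ) = g'(ξ₁)`, and integrating by parts in `ξ₁` moves
the derivative onto `φ` with no boundary term. Cauchy–Schwarz on the square bounds the result by
`‖∂₁φ‖ ‖g‖`, and an explicit computation gives `‖g‖ ≤ |ŵ|_{H²}` (so `C = 1` works). The second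
component is symmetric. -/

open MeasureTheory

/-- The `H²` seminorm of `v` on the rectangle `[a,b] × [c,d]`, each ordering of mixed
partial derivatives counted. -/
noncomputable def semiH2R (v : ℝ → ℝ → ℝ) (a b c d : ℝ) : ℝ :=
  Real.sqrt (∫ x in a..b, ∫ y in c..d,
    (pdx (pdx v) x y) ^ 2 + (pdx (pdy v) x y) ^ 2 + (pdy (pdx v) x y) ^ 2
      + (pdy (pdy v) x y) ^ 2)

/-- The `L²` norm of the gradient of `φ` on the rectangle `[a,b] × [c,d]`. -/
noncomputable def gradL2R (φ : ℝ → ℝ → ℝ) (a b c d : ℝ) : ℝ :=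
  Real.sqrt (∫ x in a..b, ∫ y in c..d, (pdx φ x y) ^ 2 + (pdy φ x y) ^ 2)

/-- `φ` is continuously differentiable on a neighborhood of the rectangle `[a,b] × [c,d]`. -/
def C1Near (φ : ℝ → ℝ → ℝ) (a b c d : ℝ) : Prop :=
  ∃ U : Set (ℝ × ℝ), IsOpen U ∧ Set.Icc a b ×ˢ Set.Icc c d ⊆ U ∧
    ContDiffOn ℝ 1 (fun p : ℝ × ℝ => φ p.1 p.2) U

open Set Function

theorem abs_integral_mul_le_sqrt_mul_sqrt {α : Type*} [MeasurableSpace α] {μ : Measure α}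
    {f g : α → ℝ} (hf : Integrable (fun x => f x ^ 2) μ) (hg : Integrable (fun x => g x ^ 2) μ)
    (hfg : Integrable (fun x => f x * g x) μ) :
    |∫ x, f x * g x ∂μ| ≤ √(∫ x, f x ^ 2 ∂μ) * √(∫ x, g x ^ 2 ∂μ) := by
  set A := ∫ x, f x ^ 2 ∂μ
  set B := ∫ x, f x * g x ∂μ
  set C := ∫ x, g x ^ 2 ∂μ
  have hquad : ∀ t : ℝ, 0 ≤ A * (t * t) + 2 * B * t + C := fun t => by
    have hexpand : ∫ x, (t * f x + g x) ^ 2 ∂μ = A * (t * t) + 2 * B * t + C := by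
      calc ∫ x, (t * f x + g x) ^ 2 ∂μ
          = ∫ x, (t * t * f x ^ 2 + 2 * t * (f x * g x)) + g x ^ 2 ∂μ :=
            integral_congr_ae (ae_of_all _ fun x => by ring)
        _ = A * (t * t) + 2 * B * t + C := by
            rw [integral_add (by exact (hf.const_mul _).add (hfg.const_mul _)) hg,
              integral_add (hf.const_mul _) (hfg.const_mul _), integral_const_mul,
              integral_const_mul]
            ring
    exact hexpand ▸ integral_nonneg fun x => sq_nonneg _
  have hB : B ^ 2 ≤ A * C := by
    have hdisc := discrim_le_zero hquad
    rw [discrim] at hdisc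
    linarith
  calc |B| = √(B ^ 2) := (Real.sqrt_sq_eq_abs B).symm
    _ ≤ √(A * C) := Real.sqrt_le_sqrt hB
    _ = √A * √C := Real.sqrt_mul (integral_nonneg fun x => sq_nonneg _) C

section Rectangle

variable {a b c d : ℝ}

theorem integrableOn_Ioc_prod_Ioc_of_continuousOn {F : ℝ × ℝ → ℝ}
    (hF : ContinuousOn F (Icc a b ×ˢ Icc c d)) : IntegrableOn F (Ioc a b ×ˢ Ioc c d) :=
  (hF.integrableOn_compact (isCompact_Icc.prod isCompact_Icc)).mono_set
    (prod_mono Ioc_subset_Icc_self Ioc_subset_Icc_self)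

theorem intervalIntegral_intervalIntegral_eq_setIntegral_prod (hab : a ≤ b) (hcd : c ≤ d)
    {F : ℝ → ℝ → ℝ} (hF : ContinuousOn (uncurry F) (Icc a b ×ˢ Icc c d)) :
    ∫ x in a..b, ∫ y in c..d, F x y = ∫ p in Ioc a b ×ˢ Ioc c d, uncurry F p := by
  simp only [intervalIntegral.integral_of_le hab, intervalIntegral.integral_of_le hcd]
  rw [Measure.volume_eq_prod, setIntegral_prod _ (integrableOn_Ioc_prod_Ioc_of_continuousOn hF)]
  rfl

theorem intervalIntegral_intervalIntegral_swap_of_continuousOn (hab : a ≤ b) (hcd : c ≤ d)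
    {F : ℝ → ℝ → ℝ} (hF : ContinuousOn (uncurry F) (Icc a b ×ˢ Icc c d)) :
    ∫ x in a..b, ∫ y in c..d, F x y = ∫ y in c..d, ∫ x in a..b, F x y := by
  apply intervalIntegral_intervalIntegral_swap
  rw [uIoc_of_le hab, uIoc_of_le hcd]
  exact integrableOn_Ioc_prod_Ioc_of_continuousOn hF

theorem intervalIntegral_intervalIntegral_mono_on (hab : a ≤ b) (hcd : c ≤ d)
    {F G : ℝ → ℝ → ℝ} (hF : ContinuousOn (uncurry F) (Icc a b ×ˢ Icc c d))
    (hG : ContinuousOn (uncurry G) (Icc a b ×ˢ Icc c d))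
    (hFG : ∀ x ∈ Icc a b, ∀ y ∈ Icc c d, F x y ≤ G x y) :
    ∫ x in a..b, ∫ y in c..d, F x y ≤ ∫ x in a..b, ∫ y in c..d, G x y := by
  rw [intervalIntegral_intervalIntegral_eq_setIntegral_prod hab hcd hF,
    intervalIntegral_intervalIntegral_eq_setIntegral_prod hab hcd hG]
  exact setIntegral_mono_on (integrableOn_Ioc_prod_Ioc_of_continuousOn hF)
    (integrableOn_Ioc_prod_Ioc_of_continuousOn hG) (measurableSet_Ioc.prod measurableSet_Ioc)
    fun p hp => hFG p.1 (Ioc_subset_Icc_self hp.1) p.2 (Ioc_subset_Icc_self hp.2)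

theorem abs_intervalIntegral_intervalIntegral_mul_le (hab : a ≤ b) (hcd : c ≤ d)
    {F G : ℝ → ℝ → ℝ} (hF : ContinuousOn (uncurry F) (Icc a b ×ˢ Icc c d))
    (hG : ContinuousOn (uncurry G) (Icc a b ×ˢ Icc c d)) :
    |∫ x in a..b, ∫ y in c..d, F x y * G x y| ≤
      √(∫ x in a..b, ∫ y in c..d, F x y ^ 2) * √(∫ x in a..b, ∫ y in c..d, G x y ^ 2) := by
  rw [intervalIntegral_intervalIntegral_eq_setIntegral_prod hab hcd
      (F := fun x y => F x y * G x y) (hF.fun_mul hG),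
    intervalIntegral_intervalIntegral_eq_setIntegral_prod hab hcd
      (F := fun x y => F x y ^ 2) (hF.fun_pow 2),
    intervalIntegral_intervalIntegral_eq_setIntegral_prod hab hcd
      (F := fun x y => G x y ^ 2) (hG.fun_pow 2)]
  exact abs_integral_mul_le_sqrt_mul_sqrt (integrableOn_Ioc_prod_Ioc_of_continuousOn (hF.fun_pow 2))
    (integrableOn_Ioc_prod_Ioc_of_continuousOn (hG.fun_pow 2))
    (integrableOn_Ioc_prod_Ioc_of_continuousOn (hF.fun_mul hG))

end Rectangle

section PartialDerivatives

variable {f : ℝ → ℝ → ℝ} {x y : ℝ}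

theorem hasDerivAt_fderiv_apply_fst (hf : DifferentiableAt ℝ (uncurry f) (x, y)) :
    HasDerivAt (fun t => f t y) (fderiv ℝ (uncurry f) (x, y) (1, 0)) x := by
  exact hf.hasFDerivAt.comp_hasDerivAt x ((hasDerivAt_id' x).prodMk (hasDerivAt_const x y))

theorem hasDerivAt_fderiv_apply_snd (hf : DifferentiableAt ℝ (uncurry f) (x, y)) :
    HasDerivAt (fun t => f x t) (fderiv ℝ (uncurry f) (x, y) (0, 1)) y := by
  exact hf.hasFDerivAt.comp_hasDerivAt y ((hasDerivAt_const y x).prodMk (hasDerivAt_id' y))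

theorem pdx_fst_add_snd (g h : ℝ → ℝ) : pdx (fun x y => g x + h y) = fun x _ => deriv g x :=
  funext₂ fun _ _ => deriv_add_const _

theorem pdy_fst_add_snd (g h : ℝ → ℝ) : pdy (fun x y => g x + h y) = fun _ y => deriv h y :=
  funext₂ fun _ _ => deriv_const_add _

end PartialDerivatives

namespace C1Near

variable {φ : ℝ → ℝ → ℝ} {a b c d : ℝ}

theorem differentiableAt (hφ : C1Near φ a b c d) {p : ℝ × ℝ} (hp : p ∈ Icc a b ×ˢ Icc c d) :
    DifferentiableAt ℝ (uncurry φ) p := by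
  obtain ⟨U, hU, hsub, hφU⟩ := hφ
  exact (hφU.contDiffAt (hU.mem_nhds (hsub hp))).differentiableAt one_ne_zero

theorem continuousOn (hφ : C1Near φ a b c d) : ContinuousOn (uncurry φ) (Icc a b ×ˢ Icc c d) :=
  fun _ hp => (hφ.differentiableAt hp).continuousAt.continuousWithinAt

theorem continuousOn_fderiv (hφ : C1Near φ a b c d) :
    ContinuousOn (fderiv ℝ (uncurry φ)) (Icc a b ×ˢ Icc c d) := by
  obtain ⟨U, hU, hsub, hφU⟩ := hφ
  exact (hφU.continuousOn_fderiv_of_isOpen hU le_rfl).mono hsub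

theorem hasDerivAt_pdx (hφ : C1Near φ a b c d) {x y : ℝ} (hx : x ∈ Icc a b) (hy : y ∈ Icc c d) :
    HasDerivAt (fun t => φ t y) (pdx φ x y) x :=
  (hasDerivAt_fderiv_apply_fst (hφ.differentiableAt ⟨hx, hy⟩)).differentiableAt.hasDerivAt

theorem hasDerivAt_pdy (hφ : C1Near φ a b c d) {x y : ℝ} (hx : x ∈ Icc a b) (hy : y ∈ Icc c d) :
    HasDerivAt (fun t => φ x t) (pdy φ x y) y :=
  (hasDerivAt_fderiv_apply_snd (hφ.differentiableAt ⟨hx, hy⟩)).differentiableAt.hasDerivAt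

theorem continuousOn_pdx (hφ : C1Near φ a b c d) :
    ContinuousOn (uncurry (pdx φ)) (Icc a b ×ˢ Icc c d) :=
  (hφ.continuousOn_fderiv.clm_apply continuousOn_const).congr fun _ hp =>
    (hasDerivAt_fderiv_apply_fst (hφ.differentiableAt hp)).deriv

theorem continuousOn_pdy (hφ : C1Near φ a b c d) :
    ContinuousOn (uncurry (pdy φ)) (Icc a b ×ˢ Icc c d) :=
  (hφ.continuousOn_fderiv.clm_apply continuousOn_const).congr fun _ hp =>
    (hasDerivAt_fderiv_apply_snd (hφ.differentiableAt hp)).deriv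

end C1Near

theorem integral_mul_deriv_eq_neg_integral_deriv_mul {a b : ℝ} {u u' v : ℝ → ℝ}
    (hu : ∀ x ∈ uIcc a b, HasDerivAt u (u' x) x) (hu' : IntervalIntegrable u' volume a b)
    (hv : ContDiff ℝ 1 v) (hva : v a = 0) (hvb : v b = 0) :
    ∫ x in a..b, u x * deriv v x = -∫ x in a..b, u' x * v x := by
  rw [intervalIntegral.integral_mul_deriv_eq_deriv_mul hu
    (fun x _ => (hv.differentiable one_ne_zero x).hasDerivAt) hu'
    ((hv.continuous_deriv le_rfl).intervalIntegrable a b), hva, hvb]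
  ring

namespace C1Near

variable {φ : ℝ → ℝ → ℝ} {a b c d : ℝ}

theorem abs_integral_mul_deriv_fst_le (hφ : C1Near φ a b c d) (hab : a ≤ b) (hcd : c ≤ d)
    {g : ℝ → ℝ} (hg : ContDiff ℝ 1 g) (hga : g a = 0) (hgb : g b = 0) :
    |∫ x in a..b, ∫ y in c..d, φ x y * deriv g x| ≤
      √(∫ x in a..b, ∫ y in c..d, pdx φ x y ^ 2) * √((d - c) * ∫ x in a..b, g x ^ 2) := by
  have hibp : ∀ y ∈ uIcc c d,
      ∫ x in a..b, φ x y * deriv g x = -∫ x in a..b, pdx φ x y * g x := fun y hy => by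
    rw [uIcc_of_le hcd] at hy
    refine integral_mul_deriv_eq_neg_integral_deriv_mul
      (fun x hx => hφ.hasDerivAt_pdx (uIcc_of_le hab ▸ hx) hy) ?_ hg hga hgb
    refine ContinuousOn.intervalIntegrable ?_
    rw [uIcc_of_le hab]
    exact hφ.continuousOn_pdx.comp (continuousOn_id.prodMk continuousOn_const)
      fun x hx => ⟨hx, hy⟩
  have hcont : ContinuousOn (uncurry fun x (_ : ℝ) => g x) (Icc a b ×ˢ Icc c d) :=
    (hg.continuous.comp continuous_fst).continuousOn
  calc |∫ x in a..b, ∫ y in c..d, φ x y * deriv g x|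
      = |∫ y in c..d, ∫ x in a..b, φ x y * deriv g x| := by
        rw [intervalIntegral_intervalIntegral_swap_of_continuousOn hab hcd
          (F := fun x y => φ x y * deriv g x) (hφ.continuousOn.fun_mul
            ((hg.continuous_deriv le_rfl).comp continuous_fst).continuousOn)]
    _ = |∫ y in c..d, ∫ x in a..b, pdx φ x y * g x| := by
        rw [intervalIntegral.integral_congr hibp, intervalIntegral.integral_neg, abs_neg]
    _ = |∫ x in a..b, ∫ y in c..d, pdx φ x y * g x| := by
        rw [intervalIntegral_intervalIntegral_swap_of_continuousOn hab hcd
          (F := fun x y => pdx φ x y * g x) (hφ.continuousOn_pdx.fun_mul hcont)]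
    _ ≤ √(∫ x in a..b, ∫ y in c..d, pdx φ x y ^ 2) * √(∫ x in a..b, ∫ y in c..d, g x ^ 2) :=
        abs_intervalIntegral_intervalIntegral_mul_le hab hcd hφ.continuousOn_pdx hcont
    _ = √(∫ x in a..b, ∫ y in c..d, pdx φ x y ^ 2) * √((d - c) * ∫ x in a..b, g x ^ 2) := by
        simp only [intervalIntegral.integral_const, smul_eq_mul,
          intervalIntegral.integral_const_mul]

theorem abs_integral_mul_deriv_snd_le (hφ : C1Near φ a b c d) (hab : a ≤ b) (hcd : c ≤ d)
    {g : ℝ → ℝ} (hg : ContDiff ℝ 1 g) (hgc : g c = 0) (hgd : g d = 0) :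
    |∫ x in a..b, ∫ y in c..d, φ x y * deriv g y| ≤
      √(∫ x in a..b, ∫ y in c..d, pdy φ x y ^ 2) * √((b - a) * ∫ y in c..d, g y ^ 2) := by
  have hibp : ∀ x ∈ uIcc a b,
      ∫ y in c..d, φ x y * deriv g y = -∫ y in c..d, pdy φ x y * g y := fun x hx => by
    rw [uIcc_of_le hab] at hx
    refine integral_mul_deriv_eq_neg_integral_deriv_mul
      (fun y hy => hφ.hasDerivAt_pdy hx (uIcc_of_le hcd ▸ hy)) ?_ hg hgc hgd
    refine ContinuousOn.intervalIntegrable ?_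
    rw [uIcc_of_le hcd]
    exact hφ.continuousOn_pdy.comp (continuousOn_const.prodMk continuousOn_id)
      fun y hy => ⟨hx, hy⟩
  calc |∫ x in a..b, ∫ y in c..d, φ x y * deriv g y|
      = |∫ x in a..b, ∫ y in c..d, pdy φ x y * g y| := by
        rw [intervalIntegral.integral_congr hibp, intervalIntegral.integral_neg, abs_neg]
    _ ≤ √(∫ x in a..b, ∫ y in c..d, pdy φ x y ^ 2) * √(∫ x in a..b, ∫ y in c..d, g y ^ 2) :=
        abs_intervalIntegral_intervalIntegral_mul_le hab hcd hφ.continuousOn_pdy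
          (hg.continuous.comp continuous_snd).continuousOn
    _ = √(∫ x in a..b, ∫ y in c..d, pdy φ x y ^ 2) * √((b - a) * ∫ y in c..d, g y ^ 2) := by
        rw [intervalIntegral.integral_const, smul_eq_mul]

theorem sqrt_integral_pdx_sq_le_gradL2R (hφ : C1Near φ a b c d) (hab : a ≤ b) (hcd : c ≤ d) :
    √(∫ x in a..b, ∫ y in c..d, pdx φ x y ^ 2) ≤ gradL2R φ a b c d :=
  Real.sqrt_le_sqrt <| intervalIntegral_intervalIntegral_mono_on hab hcd
    (hφ.continuousOn_pdx.fun_pow 2)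
    ((hφ.continuousOn_pdx.fun_pow 2).fun_add (hφ.continuousOn_pdy.fun_pow 2))
    fun _ _ _ _ => le_add_of_nonneg_right (sq_nonneg _)

theorem sqrt_integral_pdy_sq_le_gradL2R (hφ : C1Near φ a b c d) (hab : a ≤ b) (hcd : c ≤ d) :
    √(∫ x in a..b, ∫ y in c..d, pdy φ x y ^ 2) ≤ gradL2R φ a b c d :=
  Real.sqrt_le_sqrt <| intervalIntegral_intervalIntegral_mono_on hab hcd
    (hφ.continuousOn_pdy.fun_pow 2)
    ((hφ.continuousOn_pdx.fun_pow 2).fun_add (hφ.continuousOn_pdy.fun_pow 2))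
    fun _ _ _ _ => le_add_of_nonneg_left (sq_nonneg _)

end C1Near

theorem integral_neg_one_one_of_eq_sextic {f : ℝ → ℝ} (a₀ a₁ a₂ a₃ a₄ a₅ a₆ : ℝ)
    (hf : ∀ x, f x = a₀ + a₁ * x + a₂ * x ^ 2 + a₃ * x ^ 3 + a₄ * x ^ 4 + a₅ * x ^ 5 + a₆ * x ^ 6) :
    ∫ x in (-1:ℝ)..1, f x = 2 * a₀ + 2 / 3 * a₂ + 2 / 5 * a₄ + 2 / 7 * a₆ := by
  rw [intervalIntegral.integral_congr fun x _ => hf x,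
    intervalIntegral.integral_eq_sub_of_hasDerivAt (f := fun x => a₀ * x + a₁ / 2 * x ^ 2
      + a₂ / 3 * x ^ 3 + a₃ / 4 * x ^ 4 + a₄ / 5 * x ^ 5 + a₅ / 6 * x ^ 6 + a₆ / 7 * x ^ 7)
      (fun x _ => ?_) (Continuous.intervalIntegrable (by fun_prop) _ _)]
  · ring
  · refine (hasDerivAt_deriv_iff.2 (by fun_prop)).congr_deriv ?_
    simp (disch := fun_prop) only [deriv_fun_add, deriv_fun_mul, deriv_fun_pow, deriv_const',
      deriv_id'', deriv_div_const]
    norm_num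
    ring

theorem integral_sq_sub_one_mul_sq (p q : ℝ) :
    ∫ x in (-1:ℝ)..1, ((x ^ 2 - 1) * (p + q * x)) ^ 2 = 16 / 15 * p ^ 2 + 16 / 105 * q ^ 2 :=
  (integral_neg_one_one_of_eq_sextic (p ^ 2) (2 * p * q) (q ^ 2 - 2 * p ^ 2) (-4 * p * q)
    (p ^ 2 - 2 * q ^ 2) (2 * p * q) (q ^ 2) fun x => by ring).trans (by ring)

section MorleyShape

variable {w : ℝ → ℝ → ℝ} {c₀ c₁ c₂ c₃ c₄ c₅ c₆ c₇ : ℝ}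

theorem sub_Ihat_eq_of_eq_cubic (hw : ∀ x y, w x y = c₀ + c₁ * x + c₂ * y + c₃ * x ^ 2
      + c₄ * (x * y) + c₅ * y ^ 2 + c₆ * x ^ 3 + c₇ * y ^ 3) (x y : ℝ) :
    w x y - Ihat w x y = (x ^ 2 - 1) * (c₃ + c₆ * x) + (y ^ 2 - 1) * (c₅ + c₇ * y) := by
  simp only [Ihat, hw]
  ring

theorem semiH2R_eq_of_eq_cubic (hw : ∀ x y, w x y = c₀ + c₁ * x + c₂ * y + c₃ * x ^ 2
      + c₄ * (x * y) + c₅ * y ^ 2 + c₆ * x ^ 3 + c₇ * y ^ 3) :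
    semiH2R w (-1) 1 (-1) 1
      = √(16 * c₃ ^ 2 + 8 * c₄ ^ 2 + 16 * c₅ ^ 2 + 48 * c₆ ^ 2 + 48 * c₇ ^ 2) := by
  have hsecond : ∀ x y, pdx (pdx w) x y ^ 2 + pdx (pdy w) x y ^ 2 + pdy (pdx w) x y ^ 2
      + pdy (pdy w) x y ^ 2
      = (2 * c₃ + 6 * c₆ * x) ^ 2 + 2 * c₄ ^ 2 + (2 * c₅ + 6 * c₇ * y) ^ 2 := by
    intro x y
    simp (disch := fun_prop) only [pdx, pdy, hw, deriv_fun_add, deriv_fun_mul, deriv_fun_pow,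
      deriv_const', deriv_id'']
    norm_num
    ring
  unfold semiH2R
  congr 1
  refine (intervalIntegral.integral_congr fun x _ => integral_neg_one_one_of_eq_sextic
    ((2 * c₃ + 6 * c₆ * x) ^ 2 + 2 * c₄ ^ 2 + 4 * c₅ ^ 2) (24 * c₅ * c₇) (36 * c₇ ^ 2) 0 0 0 0
    fun y => by rw [hsecond]; ring).trans ?_
  exact (integral_neg_one_one_of_eq_sextic (8 * c₃ ^ 2 + 4 * c₄ ^ 2 + 8 * c₅ ^ 2 + 24 * c₇ ^ 2)
    (48 * c₃ * c₆) (72 * c₆ ^ 2) 0 0 0 0 fun x => by ring).trans (by ring)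

end MorleyShape

/-- Bramble–Hilbert type bound on the reference square for the bilinear interpolation
error of functions in the reference Morley shape space, tested against `C¹` functions. -/
theorem stmt_3 :
    ∃ C > (0:ℝ), ∀ φ w : ℝ → ℝ → ℝ, C1Near φ (-1) 1 (-1) 1 → MorleyShape2 w →
      |∫ x in (-1:ℝ)..1, ∫ y in (-1:ℝ)..1,
          φ x y * pdx (fun a b => w a b - Ihat w a b) x y|
        ≤ C * gradL2R φ (-1) 1 (-1) 1 * semiH2R w (-1) 1 (-1) 1 ∧
      |∫ x in (-1:ℝ)..1, ∫ y in (-1:ℝ)..1,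
          φ x y * pdy (fun a b => w a b - Ihat w a b) x y|
        ≤ C * gradL2R φ (-1) 1 (-1) 1 * semiH2R w (-1) 1 (-1) 1 := by
  refine ⟨1, one_pos, fun φ w hφ ⟨c₀, c₁, c₂, c₃, c₄, c₅, c₆, c₇, hw⟩ => ?_⟩
  have hg : ∀ p q : ℝ, ContDiff ℝ 1 fun t : ℝ => (t ^ 2 - 1) * (p + q * t) :=
    fun p q => by fun_prop
  have hprofile : ∀ p q : ℝ, 16 * p ^ 2 + 48 * q ^ 2
      ≤ 16 * c₃ ^ 2 + 8 * c₄ ^ 2 + 16 * c₅ ^ 2 + 48 * c₆ ^ 2 + 48 * c₇ ^ 2 →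
      √((1 - -1) * ∫ t in (-1:ℝ)..1, ((t ^ 2 - 1) * (p + q * t)) ^ 2)
        ≤ semiH2R w (-1) 1 (-1) 1 := fun p q hpq => by
    rw [semiH2R_eq_of_eq_cubic hw, integral_sq_sub_one_mul_sq]
    exact Real.sqrt_le_sqrt (by nlinarith [sq_nonneg p, sq_nonneg q])
  have h1 : (-1 : ℝ) ≤ 1 := by norm_num
  rw [funext₂ (sub_Ihat_eq_of_eq_cubic hw), pdx_fst_add_snd, pdy_fst_add_snd, one_mul]
  constructor
  · refine (hφ.abs_integral_mul_deriv_fst_le h1 h1 (hg c₃ c₆) (by norm_num) (by norm_num)).trans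
      (mul_le_mul (hφ.sqrt_integral_pdx_sq_le_gradL2R h1 h1) (hprofile c₃ c₆ ?_)
        (Real.sqrt_nonneg _) (Real.sqrt_nonneg _))
    nlinarith [sq_nonneg c₄, sq_nonneg c₅, sq_nonneg c₇]
  · refine (hφ.abs_integral_mul_deriv_snd_le h1 h1 (hg c₅ c₇) (by norm_num) (by norm_num)).trans
      (mul_le_mul (hφ.sqrt_integral_pdy_sq_le_gradL2R h1 h1) (hprofile c₅ c₇ ?_)
        (Real.sqrt_nonneg _) (Real.sqrt_nonneg _))
    nlinarith [sq_nonneg c₃, sq_nonneg c₄, sq_nonneg c₆]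
end

section
/- Let w be any function in the shape space P(K) = P₂(K) + span{x₁³, x₂³, x₃³, x₁x₂x₃} of the three-dimensional cubic Morley element on the cube K. Then for each i ∈ {1, 2, 3}, the deviation of ∂w/∂xᵢ from its face mean is the same function on the two opposite faces of K normal to the xᵢ-axis: (R⁰_{Fᵢ⁺}(∂w/∂xᵢ))(y) = (R⁰_{Fᵢ⁻}(∂w/∂xᵢ))(y) for all points y of the common parameter domain of the two faces. -/
/-! On the shape space, `∂w/∂x₁` has the form `g x₁ + φ x₂ x₃`: the only monomials of `w`
whose `x₁`-derivative still depends on `x₁` are `x₁²` and `x₁³`, which involve no other variable.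
Subtracting the face mean removes the constant `g (x_{1,c} ± h)` and leaves `φ` minus its mean on
both faces. The other two directions follow because the shape space is invariant under
permutations of the coordinates. -/

open MeasureTheory

/-- Partial derivative in the first variable of a curried function on `ℝ³`. -/
noncomputable def qd1 (f : ℝ → ℝ → ℝ → ℝ) : ℝ → ℝ → ℝ → ℝ :=
  fun x y z => deriv (fun t => f t y z) x

/-- Partial derivative in the second variable of a curried function on `ℝ³`. -/
noncomputable def qd2 (f : ℝ → ℝ → ℝ → ℝ) : ℝ → ℝ → ℝ → ℝ :=
  fun x y z => deriv (fun t => f x t z) y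

/-- Partial derivative in the third variable of a curried function on `ℝ³`. -/
noncomputable def qd3 (f : ℝ → ℝ → ℝ → ℝ) : ℝ → ℝ → ℝ → ℝ :=
  fun x y z => deriv (fun t => f x y t) z

/-- Membership in the shape space `P(K) = P₂(K) + span{x₁³, x₂³, x₃³, x₁x₂x₃}` of the
three-dimensional cubic Morley element. -/
def MorleyShape3 (w : ℝ → ℝ → ℝ → ℝ) : Prop :=
  ∃ c0 c1 c2 c3 c4 c5 c6 c7 c8 c9 c10 c11 c12 c13 : ℝ, ∀ x y z : ℝ,
    w x y z = c0 + c1 * x + c2 * y + c3 * z + c4 * x ^ 2 + c5 * y ^ 2 + c6 * z ^ 2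
      + c7 * (x * y) + c8 * (x * z) + c9 * (y * z)
      + c10 * x ^ 3 + c11 * y ^ 3 + c12 * z ^ 3 + c13 * (x * y * z)

theorem intervalIntegral_integral_const_add {φ : ℝ → ℝ → ℝ}
    (hφ : Continuous (Function.uncurry φ)) (g a b c d : ℝ) :
    ∫ s in a..b, ∫ t in c..d, (g + φ s t)
      = (b - a) * (d - c) * g + ∫ s in a..b, ∫ t in c..d, φ s t := by
  have hinner (s : ℝ) : ∫ t in c..d, (g + φ s t) = (d - c) * g + ∫ t in c..d, φ s t := by
    rw [intervalIntegral.integral_add intervalIntegrable_const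
      ((hφ.uncurry_left s).intervalIntegrable c d), intervalIntegral.integral_const, smul_eq_mul]
  simp_rw [hinner]
  rw [intervalIntegral.integral_add intervalIntegrable_const
    ((intervalIntegral.continuous_parametric_intervalIntegral_of_continuous' hφ c d).intervalIntegrable
      a b), intervalIntegral.integral_const, smul_eq_mul, mul_assoc]

theorem const_add_sub_mean_eq {φ : ℝ → ℝ → ℝ} (hφ : Continuous (Function.uncurry φ))
    {κ a b c d : ℝ} (hκ : κ * ((b - a) * (d - c)) = 1) (g y z : ℝ) :
    g + φ y z - κ * ∫ s in a..b, ∫ t in c..d, (g + φ s t)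
      = φ y z - κ * ∫ s in a..b, ∫ t in c..d, φ s t := by
  rw [intervalIntegral_integral_const_add hφ]
  linear_combination -g * hκ

theorem hasDerivAt_cubic (A B C D x : ℝ) :
    HasDerivAt (fun t => A + B * t + C * t ^ 2 + D * t ^ 3) (B + 2 * C * x + 3 * D * x ^ 2) x := by
  refine ((((hasDerivAt_id x).const_mul B).const_add A).add
    ((hasDerivAt_pow 2 x).const_mul C)).add ((hasDerivAt_pow 3 x).const_mul D) |>.congr_deriv ?_
  push_cast
  ring

namespace MorleyShape3

variable {w : ℝ → ℝ → ℝ → ℝ}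

theorem comp_swap₁₂ (hw : MorleyShape3 w) : MorleyShape3 fun x y z => w y x z := by
  obtain ⟨a0, a1, a2, a3, a4, a5, a6, a7, a8, a9, a10, a11, a12, a13, hw⟩ := hw
  exact ⟨a0, a2, a1, a3, a5, a4, a6, a7, a9, a8, a11, a10, a12, a13,
    fun x y z => by simp only [hw]; ring⟩

theorem comp_cycle (hw : MorleyShape3 w) : MorleyShape3 fun x y z => w y z x := by
  obtain ⟨a0, a1, a2, a3, a4, a5, a6, a7, a8, a9, a10, a11, a12, a13, hw⟩ := hw
  exact ⟨a0, a3, a1, a2, a6, a4, a5, a8, a9, a7, a12, a10, a11, a13,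
    fun x y z => by simp only [hw]; ring⟩

theorem exists_qd1_eq_add (hw : MorleyShape3 w) :
    ∃ (g : ℝ → ℝ) (φ : ℝ → ℝ → ℝ), Continuous (Function.uncurry φ) ∧
      ∀ x y z, qd1 w x y z = g x + φ y z := by
  obtain ⟨a0, a1, a2, a3, a4, a5, a6, a7, a8, a9, a10, a11, a12, a13, hw⟩ := hw
  refine ⟨fun x => a1 + 2 * a4 * x + 3 * a10 * x ^ 2,
    fun y z => a7 * y + a8 * z + a13 * (y * z), by fun_prop, fun x y z => ?_⟩
  have hcubic : (fun t => w t y z) = fun t =>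
      (a0 + a2 * y + a3 * z + a5 * y ^ 2 + a6 * z ^ 2 + a9 * (y * z) + a11 * y ^ 3 + a12 * z ^ 3)
        + (a1 + a7 * y + a8 * z + a13 * (y * z)) * t + a4 * t ^ 2 + a10 * t ^ 3 :=
    funext fun t => by rw [hw]; ring
  rw [qd1, hcubic, (hasDerivAt_cubic ..).deriv]
  ring

theorem qd1_sub_mean_eq (hw : MorleyShape3 w) {κ a b c d : ℝ}
    (hκ : κ * ((b - a) * (d - c)) = 1) (x x' y z : ℝ) :
    qd1 w x y z - κ * ∫ s in a..b, ∫ t in c..d, qd1 w x s t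
      = qd1 w x' y z - κ * ∫ s in a..b, ∫ t in c..d, qd1 w x' s t := by
  obtain ⟨g, φ, hφ, hqd1⟩ := hw.exists_qd1_eq_add
  simp only [hqd1, const_add_sub_mean_eq hφ hκ]

end MorleyShape3

/-- For `w` in the 3D cubic Morley shape space, the deviation of `∂w/∂xᵢ` from its face
mean coincides on the two opposite faces of `K` normal to the `xᵢ`-axis, `i = 1, 2, 3`. -/
theorem stmt_12 (c1 c2 c3 h : ℝ) (hh : 0 < h) (w : ℝ → ℝ → ℝ → ℝ)
    (hw : MorleyShape3 w) :
    (∀ y ∈ Set.Icc (c2 - h) (c2 + h), ∀ z ∈ Set.Icc (c3 - h) (c3 + h),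
        qd1 w (c1 + h) y z
            - (1 / (4 * h ^ 2)) * (∫ s in (c2 - h)..(c2 + h), ∫ t in (c3 - h)..(c3 + h), qd1 w (c1 + h) s t)
          = qd1 w (c1 - h) y z
            - (1 / (4 * h ^ 2)) * (∫ s in (c2 - h)..(c2 + h), ∫ t in (c3 - h)..(c3 + h), qd1 w (c1 - h) s t)) ∧
    (∀ x ∈ Set.Icc (c1 - h) (c1 + h), ∀ z ∈ Set.Icc (c3 - h) (c3 + h),
        qd2 w x (c2 + h) z
            - (1 / (4 * h ^ 2)) * (∫ s in (c1 - h)..(c1 + h), ∫ t in (c3 - h)..(c3 + h), qd2 w s (c2 + h) t)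
          = qd2 w x (c2 - h) z
            - (1 / (4 * h ^ 2)) * (∫ s in (c1 - h)..(c1 + h), ∫ t in (c3 - h)..(c3 + h), qd2 w s (c2 - h) t)) ∧
    (∀ x ∈ Set.Icc (c1 - h) (c1 + h), ∀ y ∈ Set.Icc (c2 - h) (c2 + h),
        qd3 w x y (c3 + h)
            - (1 / (4 * h ^ 2)) * (∫ s in (c1 - h)..(c1 + h), ∫ t in (c2 - h)..(c2 + h), qd3 w s t (c3 + h))
          = qd3 w x y (c3 - h)
            - (1 / (4 * h ^ 2)) * (∫ s in (c1 - h)..(c1 + h), ∫ t in (c2 - h)..(c2 + h), qd3 w s t (c3 - h))) := by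
  have hκ (c c' : ℝ) : 1 / (4 * h ^ 2) * (((c + h) - (c - h)) * ((c' + h) - (c' - h))) = 1 := by
    field_simp
    ring
  -- `qd2 w` and `qd3 w` are, definitionally, `qd1` of `w` with permuted arguments.
  exact ⟨fun y _ z _ => hw.qd1_sub_mean_eq (hκ c2 c3) ..,
    fun x _ z _ => hw.comp_swap₁₂.qd1_sub_mean_eq (hκ c1 c3) ..,
    fun x _ y _ => hw.comp_cycle.qd1_sub_mean_eq (hκ c1 c2) ..⟩
end
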